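/- Let m be an integer with D = m^2 + 3m + 9 square-free, and let v > 3 be a prime dividing D. Then the polynomial f_m(x - m/3) = x^3 - (D/3)x + D(2m+3)/27 has coefficients in Z_v and is Eisenstein at v, hence f_m(x) is irreducible over Q_v. -/

import Mathlib

open Polynomial

theorem stmt_3 (m D : ℤ) (hD : D = m ^ 2 + 3 * m + 9) (hsf : Squarefree D)
    (v : ℕ) [Fact v.Prime] (hv : 3 < v) (hvD : (v : ℤ) ∣ D) :
    -- the shifted polynomial x³ - (D/3)x + D(2m+3)/27 has v-integral coefficients ...
    (‖((D : ℚ_[v]) / 3)‖ ≤ 1 ∧ ‖(((D * (2 * m + 3) : ℤ) : ℚ_[v]) / 27)‖ ≤ 1) ∧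
    -- ... and is Eisenstein at v: v divides the non-leading coefficients ...
    (‖((D : ℚ_[v]) / 3)‖ < 1 ∧ ‖(((D * (2 * m + 3) : ℤ) : ℚ_[v]) / 27)‖ < 1) ∧
    -- ... and v² does not divide the constant term ...
    ((v : ℝ) ^ 2)⁻¹ < ‖(((D * (2 * m + 3) : ℤ) : ℚ_[v]) / 27)‖ ∧
    -- ... hence f_m is irreducible over ℚ_v.
    Irreducible
      ((X ^ 3 + C m * X ^ 2 - C (m + 3) * X + 1 : ℤ[X]).map (Int.castRingHom ℚ_[v])) := by
  have hp : v.Prime := Fact.out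
  have hv1R : (1:ℝ) < v := by exact_mod_cast lt_trans (by norm_num) hv
  have hnorm1 : ∀ k : ℤ, ¬((v:ℤ) ∣ k) → ‖(k:ℚ_[v])‖ = 1 := fun k hk =>
    le_antisymm (Padic.norm_int_le_one k)
      (not_lt.1 fun h => hk ((Padic.norm_intCast_lt_one_iff (k := k)).1 h))
  have hnd3 : ¬ (v:ℤ) ∣ 3 := by
    intro h
    have := Int.le_of_dvd (by norm_num) h
    omega
  have hnd27 : ¬ (v:ℤ) ∣ 27 := by
    intro h
    exact hnd3 ((Nat.prime_iff_prime_int.mp hp).dvd_of_dvd_pow (n := 3) (by norm_num at h ⊢; exact_mod_cast h))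
  have h2m3 : ¬ (v:ℤ) ∣ (2*m+3) := by
    intro h
    apply hnd27
    have h27 : (27:ℤ) = 4*D - (2*m+3)*(2*m+3) := by rw [hD]; ring
    rw [h27]
    exact dvd_sub (hvD.mul_left 4) (h.mul_right (2*m+3))
  have hv2 : ¬ ((v:ℤ))^2 ∣ D := by
    intro h
    exact (Nat.prime_iff_prime_int.mp hp).not_unit (hsf _ (by rwa [pow_two] at h))
  have normD : ‖(D : ℚ_[v])‖ = (v:ℝ)^(-1:ℤ) := by
    refine le_antisymm ?_ ?_
    · have := (Padic.norm_int_le_pow_iff_dvd (p := v) D 1).2 (by simpa using hvD)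
      simpa using this
    · by_contra hlt
      push_neg at hlt
      have h2 : ‖(D : ℚ_[v])‖ ≤ (v:ℝ)^(-1-1:ℤ) := by
        have := (Padic.norm_lt_pow_iff_norm_le_pow_sub_one (D : ℚ_[v]) (-1)).1 hlt
        simpa using this
      have : ((v:ℤ))^2 ∣ D := by
        have := (Padic.norm_int_le_pow_iff_dvd (p := v) D 2).1 (by
          norm_num at h2 ⊢; exact h2)
        exact_mod_cast this
      exact hv2 this
  have h3n : ‖((3:ℤ):ℚ_[v])‖ = 1 := hnorm1 3 hnd3
  have h27n : ‖((27:ℤ):ℚ_[v])‖ = 1 := hnorm1 27 hnd27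
  have h2m3n : ‖((2*m+3:ℤ):ℚ_[v])‖ = 1 := hnorm1 _ h2m3
  have normc1 : ‖((D : ℚ_[v]) / 3)‖ = (v:ℝ)^(-1:ℤ) := by
    rw [norm_div, show (3:ℚ_[v]) = ((3:ℤ):ℚ_[v]) by norm_cast, h3n, div_one, normD]
  have normc0 : ‖(((D * (2 * m + 3) : ℤ) : ℚ_[v]) / 27)‖ = (v:ℝ)^(-1:ℤ) := by
    rw [norm_div, show ((D * (2 * m + 3) : ℤ) : ℚ_[v]) = (D:ℚ_[v]) * ((2*m+3:ℤ):ℚ_[v]) by push_cast; ring,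
      show (27:ℚ_[v]) = ((27:ℤ):ℚ_[v]) by norm_cast, h27n, div_one, norm_mul, normD, h2m3n, mul_one]
  have hvpos : (0:ℝ) < (v:ℝ)^(-1:ℤ) := zpow_pos (by linarith) _
  have hvlt1 : (v:ℝ)^(-1:ℤ) < 1 := by
    rw [zpow_neg_one]
    exact inv_lt_one_of_one_lt₀ hv1R
  refine ⟨⟨by rw [normc1]; linarith, by rw [normc0]; linarith⟩,
    ⟨by rw [normc1]; linarith, by rw [normc0]; linarith⟩, ?_, ?_⟩
  · rw [normc0, show ((v:ℝ)^2)⁻¹ = (v:ℝ)^(-2:ℤ) by rw [← zpow_natCast, ← zpow_neg]; norm_num]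
    exact zpow_lt_zpow_right₀ hv1R (by norm_num)
  · -- irreducibility
    have h1 : (X ^ 3 + C m * X ^ 2 - C (m + 3) * X + 1 : ℤ[X]).Monic := by monicity!
    have h2 : (X ^ 3 + C m * X ^ 2 - C (m + 3) * X + 1 : ℤ[X]).natDegree = 3 := by compute_degree!
    set P := (X ^ 3 + C m * X ^ 2 - C (m + 3) * X + 1 : ℤ[X]).map (Int.castRingHom ℚ_[v]) with hP
    have hPm : P.Monic := h1.map _
    have hP3 : P.natDegree = 3 := by rw [hP, h1.natDegree_map]; exact h2
    rw [hPm.irreducible_iff_roots_eq_zero_of_degree_le_three (by omega) (by omega)]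
    rw [Multiset.eq_zero_iff_forall_notMem]
    intro α hmem
    rw [mem_roots hPm.ne_zero] at hmem
    have hα : α ^ 3 + (m:ℚ_[v]) * α ^ 2 - ((m:ℚ_[v]) + 3) * α + 1 = 0 := by
      have := hmem
      simp only [IsRoot, hP, eval_map, eval₂_add, eval₂_sub, eval₂_mul, eval₂_pow, eval₂_X,
        eval₂_C, eval₂_one, Int.coe_castRingHom] at this
      push_cast at this
      linear_combination this
    set β : ℚ_[v] := α + (m:ℚ_[v])/3 with hβ
    have key : β ^ 3 - (D : ℚ_[v])/3 * β + ((D * (2*m+3) : ℤ) : ℚ_[v])/27 = 0 := by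
      rw [hβ]
      subst hD
      push_cast
      linear_combination hα
    set c₀ : ℚ_[v] := ((D * (2*m+3) : ℤ) : ℚ_[v])/27 with hc₀
    have hβ3 : β ^ 3 = (D : ℚ_[v])/3 * β + (-c₀) := by linear_combination key
    have hnb3 : ‖β‖^3 ≤ max ((v:ℝ)^(-1:ℤ) * ‖β‖) ((v:ℝ)^(-1:ℤ)) := by
      calc ‖β‖^3 = ‖β^3‖ := (norm_pow _ _).symm
        _ ≤ max ‖(D : ℚ_[v])/3 * β‖ ‖-c₀‖ := by rw [hβ3]; exact Padic.nonarchimedean _ _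
        _ = max ((v:ℝ)^(-1:ℤ) * ‖β‖) ((v:ℝ)^(-1:ℤ)) := by
            rw [norm_neg, norm_mul, normc1, normc0]
    rcases le_or_gt 1 ‖β‖ with hb | hb
    · have hbp : (0:ℝ) < ‖β‖ := lt_of_lt_of_le one_pos hb
      have h4 : ‖β‖^3 ≤ (v:ℝ)^(-1:ℤ) * ‖β‖ := le_trans hnb3 (by
        apply max_le le_rfl
        nlinarith)
      have h6 : ‖β‖^2 ≤ (v:ℝ)^(-1:ℤ) := by nlinarith
      nlinarith
    · have hble : ‖β‖ ≤ (v:ℝ)^(-1:ℤ) := by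
        have := (Padic.norm_lt_pow_iff_norm_le_pow_sub_one β 0).1 (by simpa using hb)
        simpa using this
      have hc0e : c₀ = (D : ℚ_[v])/3 * β + (-(β^3)) := by linear_combination key
      have h5 : (v:ℝ)^(-1:ℤ) ≤ max ((v:ℝ)^(-1:ℤ) * ‖β‖) (‖β‖^3) := by
        calc (v:ℝ)^(-1:ℤ) = ‖c₀‖ := normc0.symm
          _ ≤ max ‖(D : ℚ_[v])/3 * β‖ ‖-(β^3)‖ := by rw [hc0e]; exact Padic.nonarchimedean _ _
          _ = max ((v:ℝ)^(-1:ℤ) * ‖β‖) (‖β‖^3) := by rw [norm_neg, norm_mul, normc1, norm_pow]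
      rcases le_max_iff.1 h5 with h | h
      · nlinarith
      · nlinarith [pow_le_pow_left₀ (norm_nonneg β) hble 3, hvpos, hvlt1,
          mul_pos hvpos hvpos]
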